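/- arXiv:2603.16234 — 2 statements merged into one kernel-verified Lean document; each statement's English description precedes it below -/
import Mathlib

section
/- For every integer n ≥ 1, the conjugator length function of the surface group G satisfies CL(2n) ≥ n − 1. -/
namespace SG

/-- A letter of the alphabet `S± = {cᵢ^{±1}}`: `(i, true)` is `c_{i+1}`,
`(i, false)` is `c_{i+1}⁻¹`. -/
abbrev Letter (g : ℕ) := Fin (2*g) × Bool

/-- A word in the alphabet `S±`. -/
abbrev Word (g : ℕ) := List (Letter g)

/-- The surface relator `c₁c₂⋯c_{2g}c₁⁻¹c₂⁻¹⋯c_{2g}⁻¹` in the free group. -/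
def relator (g : ℕ) : FreeGroup (Fin (2*g)) :=
  (List.ofFn fun i : Fin (2*g) => FreeGroup.of i).prod *
  (List.ofFn fun i : Fin (2*g) => (FreeGroup.of i)⁻¹).prod

/-- The surface group with the symmetric presentation. -/
abbrev SurfaceGroup (g : ℕ) :=
  PresentedGroup ({relator g} : Set (FreeGroup (Fin (2*g))))

/-- The generator `c_{i+1}` of the surface group. -/
def gen (g : ℕ) (i : Fin (2*g)) : SurfaceGroup g := PresentedGroup.of i

/-- The inverse of a letter. -/
def invLetter (g : ℕ) (a : Letter g) : Letter g := (a.1, !a.2)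

/-- The group element represented by a letter. -/
def evalLetter (g : ℕ) (a : Letter g) : SurfaceGroup g :=
  if a.2 then gen g a.1 else (gen g a.1)⁻¹

/-- The group element represented by a word. -/
def eval (g : ℕ) (W : Word g) : SurfaceGroup g := (W.map (evalLetter g)).prod

/-- The formal inverse `x_n⁻¹ ⋯ x₁⁻¹` of a word `x₁ ⋯ x_n`. -/
def wordInv (g : ℕ) (W : Word g) : Word g := (W.map (invLetter g)).reverse

/-- Word length of a group element: the least `n` such that the element is a
product of `n` elements of `S ∪ S⁻¹`. -/
noncomputable def len (g : ℕ) (u : SurfaceGroup g) : ℕ :=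
  sInf {n | ∃ W : Word g, W.length = n ∧ eval g W = u}

/-- `conjLen g u v` is the minimum of `|x|` over conjugators `x` with `x⁻¹ux = v`. -/
noncomputable def conjLen (g : ℕ) (u v : SurfaceGroup g) : ℕ :=
  sInf {k | ∃ x : SurfaceGroup g, x⁻¹ * u * x = v ∧ len g x = k}

/-- The conjugator length function: `CL g n` is the least `N` such that any
conjugate `u, v` with `|u| + |v| ≤ n` admit a conjugator of length `≤ N`. -/
noncomputable def CL (g : ℕ) (n : ℕ) : ℕ :=
  sInf {N | ∀ u v : SurfaceGroup g,
    (∃ x : SurfaceGroup g, x⁻¹ * u * x = v) → len g u + len g v ≤ n →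
      conjLen g u v ≤ N}

/-- Rank of a letter in the ascending order
`c_{2g} ≺ ⋯ ≺ c₂ ≺ c₁ ≺ c₁⁻¹ ≺ c₂⁻¹ ≺ ⋯ ≺ c_{2g}⁻¹`. -/
def rank (g : ℕ) (a : Letter g) : ℕ :=
  if a.2 then (2*g - 1) - (a.1 : ℕ) else 2*g + (a.1 : ℕ)

/-- The strict order `≺` on letters. -/
def letterLt (g : ℕ) (a b : Letter g) : Prop := rank g a < rank g b

/-- The length-lexicographical order `≺` on words. -/
def wordLt (g : ℕ) (X Y : Word g) : Prop :=
  X.length < Y.length ∨ (X.length = Y.length ∧ List.Lex (letterLt g) X Y)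

/-- A word is irreducible if it is the `≺`-least word representing its element. -/
def IrreducibleWord (g : ℕ) (W : Word g) : Prop :=
  ∀ W' : Word g, eval g W' = eval g W → W' = W ∨ wordLt g W W'

/-- A word is cyclically irreducible if all its cyclic permutations are irreducible. -/
def CyclicallyIrreducibleWord (g : ℕ) (W : Word g) : Prop :=
  ∀ W' : Word g, List.IsRotated W W' → IrreducibleWord g W'

/-- A word is freely reduced if no letter is followed by its inverse. -/
def FreelyReduced (g : ℕ) (W : Word g) : Prop :=
  List.Chain' (fun a c => c ≠ invLetter g a) W

/-- The normal form of a group element: the `≺`-least word representing it. -/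
noncomputable def nf (g : ℕ) (x : SurfaceGroup g) : Word g := by
  classical
  exact if h : ∃ W : Word g, eval g W = x ∧ IrreducibleWord g W then h.choose else []

/-- The word `R = c₁c₂⋯c_{2g}c₁⁻¹c₂⁻¹⋯c_{2g}⁻¹`. -/
def Rword (g : ℕ) : Word g :=
  (List.ofFn fun i : Fin (2*g) => ((i, true) : Letter g)) ++
  (List.ofFn fun i : Fin (2*g) => ((i, false) : Letter g))

/-- `𝓡`: all cyclic permutations of `R` and of `R⁻¹`. -/
def RSet (g : ℕ) : Set (Word g) :=
  {W | List.IsRotated (Rword g) W ∨ List.IsRotated (wordInv g (Rword g)) W}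

/-- `seg g b i k` is the word `b_i b_{i+1} ⋯ b_{i+k-1}`. -/
def seg (g : ℕ) (b : ℕ → Letter g) (i k : ℕ) : Word g :=
  (List.range k).map fun j => b (i + j)

/-- `dseg g b i k` is the descending word `b_i b_{i-1} ⋯ b_{i-k+1}`
(indices taken modulo `4g`, using periodicity of `b`). -/
def dseg (g : ℕ) (b : ℕ → Letter g) (i k : ℕ) : Word g :=
  (List.range k).map fun j => b (i + 4*g - j)

/-- `b : ℕ → Letter g` is a `4g`-periodic (1-based) enumeration of the letters
`b₁, …, b_{4g}` of some word `b₁⋯b_{4g} ∈ 𝓡`. -/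
def RelSeq (g : ℕ) (b : ℕ → Letter g) : Prop :=
  (∀ i, b (i + 4*g) = b i) ∧ seg g b 1 (4*g) ∈ RSet g

/-- The `t`-th power `W^t` of a word. -/
def wpow (g : ℕ) (W : Word g) (t : ℕ) : Word g := (List.replicate t W).flatten

/-- A `k`-fractional relator: an initial segment of length `k` (with `2 ≤ k ≤ 4g`)
of some word in `𝓡`. -/
def IsFR (g : ℕ) (k : ℕ) (W : Word g) : Prop :=
  2 ≤ k ∧ k ≤ 4*g ∧ ∃ B ∈ RSet g, W = B.take k

/-- `IsLLFROcc g k W P F Q` : the factorization `W = P ++ F ++ Q` exhibits `F`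
as a `k`-locally longest fractional relator of `W`. -/
def IsLLFROcc (g : ℕ) (k : ℕ) (W P F Q : Word g) : Prop :=
  W = P ++ F ++ Q ∧ IsFR g k F ∧
  (∀ a, P.getLast? = some a → ¬ IsFR g (k+1) (a :: F)) ∧
  (∀ a, Q.head? = some a → ¬ IsFR g (k+1) (F ++ [a]))

/-- `W` contains a `k`-LLFR. -/
def HasLLFR (g : ℕ) (k : ℕ) (W : Word g) : Prop :=
  ∃ P F Q, IsLLFROcc g k W P F Q

/-- Length-lexicographical order on pairs of words. -/
def pairLt (g : ℕ) (p q : Word g × Word g) : Prop :=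
  wordLt g p.1 q.1 ∨ (p.1 = q.1 ∧ wordLt g p.2 q.2)

/-- A candidate for the reducing-subword pair of `(W₁, W₂)`. -/
def IsRSCand (g : ℕ) (W₁ W₂ C₁ C₂ : Word g) : Prop :=
  ∃ A B C' : Word g, W₁ = A ++ C₁ ∧ W₂ = C₂ ++ B ∧
    nf g (eval g (W₁ ++ W₂)) = A ++ C' ++ B

/-- `(C₁, C₂)` is the reducing-subword pair `rs(W₁, W₂)`: the `≺`-least candidate. -/
def IsRS (g : ℕ) (W₁ W₂ C₁ C₂ : Word g) : Prop :=
  IsRSCand g W₁ W₂ C₁ C₂ ∧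
  ∀ D₁ D₂ : Word g, IsRSCand g W₁ W₂ D₁ D₂ →
    (C₁ = D₁ ∧ C₂ = D₂) ∨ pairLt g (C₁, C₂) (D₁, D₂)

end SG

/-!
Send `c₁, c_{2g}` to the translation `q ↦ q + 1` of `ℚ`, `c₂, c_{2g-1}` to the dilation
`q ↦ 2q`, and every other generator to `1`. The assignment reads the same backwards, so it kills
the relator, and the exponent of `2` in the image is a height `G → ℤ` that changes by at most one
per letter; hence `|height x| ≤ |x|`. If `x⁻¹ c₁ x = c₂⁻ᵐ c₁ c₂ᵐ`, then `x c₂⁻ᵐ` centralises `c₁`,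
so its image commutes with the translation and has height `0`. Thus every such conjugator has
height `m` and length at least `m`, while `|c₁| + |c₂⁻ᵐ c₁ c₂ᵐ| ≤ 2m + 2`.
-/

theorem List.ofFn_comp_rev {α : Type*} {n : ℕ} (f : Fin n → α) :
    List.ofFn (fun i => f i.rev) = (List.ofFn f).reverse :=
  List.ext_getElem (by simp) fun i h₁ h₂ => by
    simp only [List.getElem_ofFn, List.getElem_reverse, List.length_ofFn]
    congr 1
    ext
    simp only [List.length_ofFn] at h₁
    simp only [Fin.val_rev]
    omega

theorem commute_mul_inv_of_conj_eq {G : Type*} [Group G] {a x y : G}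
    (h : x⁻¹ * a * x = y⁻¹ * a * y) : Commute a (x * y⁻¹) :=
  calc a * (x * y⁻¹) = x * (x⁻¹ * a * x) * y⁻¹ := by group
    _ = x * (y⁻¹ * a * y) * y⁻¹ := by rw [h]
    _ = x * y⁻¹ * a := by group

/-- The map `q ↦ 2 ^ scale * q + shift` of `ℚ`; multiplication is composition. -/
@[ext]
structure DyadicAffine where
  scale : ℤ
  shift : ℚ

namespace DyadicAffine

instance : One DyadicAffine := ⟨⟨0, 0⟩⟩

instance : Mul DyadicAffine := ⟨fun x y => ⟨x.scale + y.scale, x.shift + 2 ^ x.scale * y.shift⟩⟩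

instance : Inv DyadicAffine := ⟨fun x => ⟨-x.scale, -(2 ^ (-x.scale) * x.shift)⟩⟩

@[simp] theorem one_scale : (1 : DyadicAffine).scale = 0 := rfl
@[simp] theorem one_shift : (1 : DyadicAffine).shift = 0 := rfl
@[simp] theorem mul_scale (x y : DyadicAffine) : (x * y).scale = x.scale + y.scale := rfl
@[simp] theorem mul_shift (x y : DyadicAffine) : (x * y).shift = x.shift + 2 ^ x.scale * y.shift :=
  rfl
@[simp] theorem inv_scale (x : DyadicAffine) : x⁻¹.scale = -x.scale := rfl
@[simp] theorem inv_shift (x : DyadicAffine) : x⁻¹.shift = -(2 ^ (-x.scale) * x.shift) := rfl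

instance : Group DyadicAffine :=
  Group.ofLeftAxioms
    (fun x y z => by
      ext <;> simp only [mul_scale, mul_shift, zpow_add₀ (two_ne_zero (α := ℚ))] <;> ring)
    (fun x => by ext <;> simp)
    (fun x => by ext <;> simp)

def translation : DyadicAffine := ⟨0, 1⟩

def dilation : DyadicAffine := ⟨1, 0⟩

def scaleHom : DyadicAffine →* Multiplicative ℤ where
  toFun x := .ofAdd x.scale
  map_one' := rfl
  map_mul' _ _ := rfl

@[simp] theorem toAdd_scaleHom (x : DyadicAffine) : (scaleHom x).toAdd = x.scale := rfl

theorem scale_eq_zero_of_commute {x : DyadicAffine} (h : Commute translation x) :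
    x.scale = 0 := by
  have hshift : (translation * x).shift = (x * translation).shift := congrArg shift h.eq
  simp only [translation, mul_shift, zpow_zero, one_mul, mul_one] at hshift
  exact (zpow_eq_one_iff_right₀ (a := (2 : ℚ)) (by norm_num) (by norm_num)).mp (by linarith)

end DyadicAffine

namespace SG

variable {g : ℕ}

@[simp] theorem eval_nil : eval g [] = 1 := rfl

@[simp] theorem eval_cons (a : Letter g) (W : Word g) :
    eval g (a :: W) = evalLetter g a * eval g W := by
  simp [eval]

@[simp] theorem eval_append (V W : Word g) : eval g (V ++ W) = eval g V * eval g W := by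
  simp [eval]

theorem eval_wordInv (W : Word g) : eval g (wordInv g W) = (eval g W)⁻¹ := by
  induction W with
  | nil => rfl
  | cons a W ih =>
    have hinv : evalLetter g (invLetter g a) = (evalLetter g a)⁻¹ := by
      rcases a with ⟨i, _ | _⟩ <;> simp [evalLetter, invLetter]
    simp_all [wordInv]

theorem eval_surjective : Function.Surjective (eval g) := fun u =>
  PresentedGroup.generated_by _
    { carrier := Set.range (eval g)
      mul_mem' := by
        rintro _ _ ⟨V, rfl⟩ ⟨W, rfl⟩
        exact ⟨V ++ W, eval_append V W⟩
      one_mem' := ⟨[], rfl⟩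
      inv_mem' := by
        rintro _ ⟨W, rfl⟩
        exact ⟨wordInv g W, eval_wordInv W⟩ }
    (fun i => ⟨[(i, true)], by simp [evalLetter, gen]⟩) u

theorem exists_length_eq_len (u : SurfaceGroup g) :
    ∃ W : Word g, W.length = len g u ∧ eval g W = u :=
  let ⟨W, hW⟩ := eval_surjective u
  Nat.sInf_mem (s := {n | ∃ W : Word g, W.length = n ∧ eval g W = u}) ⟨W.length, W, rfl, hW⟩

theorem len_eval_le (W : Word g) : len g (eval g W) ≤ W.length :=
  Nat.sInf_le ⟨W, rfl, rfl⟩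

theorem len_gen_le (i : Fin (2*g)) : len g (gen g i) ≤ 1 := by
  simpa [evalLetter] using len_eval_le [(i, true)]

theorem len_mul_le (u v : SurfaceGroup g) : len g (u * v) ≤ len g u + len g v := by
  obtain ⟨U, hU, rfl⟩ := exists_length_eq_len u
  obtain ⟨V, hV, rfl⟩ := exists_length_eq_len v
  simpa [hU, hV] using len_eval_le (U ++ V)

theorem len_inv_le (u : SurfaceGroup g) : len g u⁻¹ ≤ len g u := by
  obtain ⟨U, hU, rfl⟩ := exists_length_eq_len u
  have h := len_eval_le (wordInv g U)
  rwa [eval_wordInv, wordInv, List.length_reverse, List.length_map, hU] at h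

theorem len_pow_le (u : SurfaceGroup g) (m : ℕ) : len g (u ^ m) ≤ m * len g u := by
  induction m with
  | zero => simpa using len_eval_le (g := g) []
  | succ m ih =>
    calc len g (u ^ (m + 1)) ≤ len g (u ^ m) + len g u := pow_succ u m ▸ len_mul_le _ _
      _ ≤ (m + 1) * len g u := by rw [add_mul, one_mul]; omega

theorem len_conj_le (x u : SurfaceGroup g) : len g (x⁻¹ * u * x) ≤ len g u + 2 * len g x := by
  have h₁ := len_mul_le (x⁻¹ * u) x
  have h₂ := len_mul_le x⁻¹ u
  have h₃ := len_inv_le x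
  omega

theorem abs_toAdd_le_len (φ : SurfaceGroup g →* Multiplicative ℤ)
    (hφ : ∀ i, |(φ (gen g i)).toAdd| ≤ 1) (u : SurfaceGroup g) : |(φ u).toAdd| ≤ len g u := by
  obtain ⟨W, hW, rfl⟩ := exists_length_eq_len u
  rw [← hW]
  clear hW
  induction W with
  | nil => simp
  | cons a W ih =>
    have ha : |(φ (evalLetter g a)).toAdd| ≤ 1 := by
      rcases a with ⟨i, _ | _⟩ <;> simpa [evalLetter] using hφ i
    simp only [eval_cons, map_mul, toAdd_mul, List.length_cons, Nat.cast_succ]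
    exact (abs_add_le _ _).trans (by linarith)

theorem le_conjLen {u v : SurfaceGroup g} {m : ℕ} (hconj : ∃ x, x⁻¹ * u * x = v)
    (h : ∀ x, x⁻¹ * u * x = v → m ≤ len g x) : m ≤ conjLen g u v :=
  le_csInf (hconj.elim fun x hx => ⟨_, x, hx, rfl⟩) (by rintro _ ⟨x, hx, rfl⟩; exact h x hx)

theorem finite_setOf_len_le (n : ℕ) : {u : SurfaceGroup g | len g u ≤ n}.Finite :=
  ((List.finite_length_le (Letter g) n).image (eval g)).subset fun u hu => by
    obtain ⟨W, hW, rfl⟩ := exists_length_eq_len u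
    exact ⟨W, (hW ▸ hu : W.length ≤ n), rfl⟩

theorem conjLen_le_CL {u v : SurfaceGroup g} {n : ℕ} (hconj : ∃ x, x⁻¹ * u * x = v)
    (hn : len g u + len g v ≤ n) : conjLen g u v ≤ CL g n := by
  have hball := finite_setOf_len_le (g := g) n
  obtain ⟨N, hN⟩ := ((hball.prod hball).image fun p => conjLen g p.1 p.2).bddAbove
  have hCL := Nat.sInf_mem (s := {N | ∀ u v : SurfaceGroup g, (∃ x, x⁻¹ * u * x = v) →
      len g u + len g v ≤ n → conjLen g u v ≤ N})
    ⟨N, fun u v _ huv => hN ⟨(u, v), ⟨(by omega : len g u ≤ n), (by omega : len g v ≤ n)⟩, rfl⟩⟩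
  exact hCL u v hconj hn

-- `relator g` is `c₁⋯c_{2g} · (c_{2g}⋯c₁)⁻¹`, so an assignment that reads the same backwards
-- kills it.
theorem lift_relator_eq_one {H : Type*} [Group H] {f : Fin (2*g) → H}
    (hf : ∀ i, f i.rev = f i) : FreeGroup.lift f (relator g) = 1 := by
  have hinv : (List.ofFn fun i => (f i)⁻¹).prod = (List.ofFn f).prod⁻¹ := by
    rw [List.prod_inv_reverse, List.map_ofFn, ← List.ofFn_comp_rev]
    simp [hf]
  simp only [relator, map_mul, map_list_prod, List.map_ofFn, Function.comp_def,
    FreeGroup.lift_apply_of, map_inv, hinv, mul_inv_cancel]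

def liftPalindrome {H : Type*} [Group H] (f : Fin (2*g) → H) (hf : ∀ i, f i.rev = f i) :
    SurfaceGroup g →* H :=
  PresentedGroup.toGroup fun _ hr => (Set.mem_singleton_iff.mp hr) ▸ lift_relator_eq_one hf

@[simp] theorem liftPalindrome_gen {H : Type*} [Group H] (f : Fin (2*g) → H)
    (hf : ∀ i, f i.rev = f i) (i : Fin (2*g)) : liftPalindrome f hf (gen g i) = f i :=
  PresentedGroup.toGroup.of _

variable (g) in
def affineGen (i : Fin (2*g)) : DyadicAffine :=
  if (i : ℕ) = 0 ∨ (i : ℕ) = 2*g - 1 then .translation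
  else if (i : ℕ) = 1 ∨ (i : ℕ) = 2*g - 2 then .dilation
  else 1

theorem affineGen_rev (i : Fin (2*g)) : affineGen g i.rev = affineGen g i := by
  have := Fin.val_rev i
  have := i.isLt
  unfold affineGen
  split_ifs <;> first | rfl | omega

variable (g) in
def height : SurfaceGroup g →* Multiplicative ℤ :=
  DyadicAffine.scaleHom.comp (liftPalindrome (affineGen g) affineGen_rev)

theorem abs_height_gen_le (i : Fin (2*g)) : |(height g (gen g i)).toAdd| ≤ 1 := by
  simp only [height, MonoidHom.comp_apply, liftPalindrome_gen, DyadicAffine.toAdd_scaleHom,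
    affineGen]
  split_ifs <;> simp [DyadicAffine.translation, DyadicAffine.dilation]

theorem height_eq_one_of_commute {i : Fin (2*g)} (hi : (i : ℕ) = 0) {x : SurfaceGroup g}
    (h : Commute (gen g i) x) : height g x = 1 := by
  have h' := h.map (liftPalindrome (affineGen g) affineGen_rev)
  rw [liftPalindrome_gen, affineGen, if_pos (Or.inl hi)] at h'
  exact congrArg Multiplicative.ofAdd (DyadicAffine.scale_eq_zero_of_commute h')

theorem height_gen_eq (hg : 2 ≤ g) {j : Fin (2*g)} (hj : (j : ℕ) = 1) :
    height g (gen g j) = .ofAdd 1 := by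
  simp only [height, MonoidHom.comp_apply, liftPalindrome_gen, affineGen,
    if_neg (show ¬((j : ℕ) = 0 ∨ (j : ℕ) = 2*g - 1) by omega), if_pos (Or.inl hj)]
  rfl

theorem le_conjLen_gen_conj_pow (hg : 2 ≤ g) {i j : Fin (2*g)} (hi : (i : ℕ) = 0)
    (hj : (j : ℕ) = 1) (m : ℕ) :
    m ≤ conjLen g (gen g i) ((gen g j ^ m)⁻¹ * gen g i * gen g j ^ m) := by
  refine le_conjLen ⟨_, rfl⟩ fun x hx => ?_
  have hcentral := height_eq_one_of_commute hi (commute_mul_inv_of_conj_eq hx)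
  rw [map_mul, map_inv, mul_inv_eq_one, map_pow, height_gen_eq hg hj] at hcentral
  have hlen := abs_toAdd_le_len (height g) abs_height_gen_le x
  rw [hcentral, toAdd_pow, toAdd_ofAdd, nsmul_one, abs_of_nonneg (by positivity)] at hlen
  exact_mod_cast hlen

end SG

theorem surface_group_CL_lower_bound_general (g : ℕ) (hg : 2 ≤ g) (n : ℕ) :
    n - 1 ≤ SG.CL g (2*n) := by
  rcases n with _ | m
  · exact Nat.zero_le _
  set c₁ := SG.gen g ⟨0, by omega⟩
  set c₂ := SG.gen g ⟨1, by omega⟩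
  have hlen : SG.len g c₁ + SG.len g ((c₂ ^ m)⁻¹ * c₁ * c₂ ^ m) ≤ 2 * (m + 1) := by
    have h₁ : SG.len g c₁ ≤ 1 := SG.len_gen_le _
    have h₂ : SG.len g (c₂ ^ m) ≤ m :=
      (SG.len_pow_le c₂ m).trans (by simpa using Nat.mul_le_mul_left m (SG.len_gen_le _))
    have h₃ := SG.len_conj_le (c₂ ^ m) c₁
    omega
  calc m + 1 - 1 = m := Nat.add_sub_cancel m 1
    _ ≤ SG.conjLen g c₁ ((c₂ ^ m)⁻¹ * c₁ * c₂ ^ m) := SG.le_conjLen_gen_conj_pow hg rfl rfl m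
    _ ≤ SG.CL g (2 * (m + 1)) := SG.conjLen_le_CL ⟨_, rfl⟩ hlen

/-- For every `n ≥ 1`, `CL(2n) ≥ n − 1` in the surface group. -/
theorem surface_group_CL_lower_bound (g : ℕ) (hg : 2 ≤ g) (n : ℕ) (hn : 1 ≤ n) :
    n - 1 ≤ SG.CL g (2*n) :=
  surface_group_CL_lower_bound_general g hg n
end

section
/- Let F be a free group with a free basis of cardinality at least 2. Then for every integer n ≥ 1, the conjugator length function of F satisfies CL(2n) = CL(2n+1) = n − 1. -/
namespace FG

/-- Word length of an element of the free group on `α`: the least `n` such that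
the element is a product of `n` elements of `S ∪ S⁻¹`, `S = {of a : a ∈ α}`. -/
noncomputable def len (α : Type) (u : FreeGroup α) : ℕ :=
  sInf {n | ∃ L : List (α × Bool), L.length = n ∧
    (L.map fun p => if p.2 then FreeGroup.of p.1 else (FreeGroup.of p.1)⁻¹).prod = u}

/-- The minimum of `|x|` over conjugators `x` with `x⁻¹ux = v`. -/
noncomputable def conjLen (α : Type) (u v : FreeGroup α) : ℕ :=
  sInf {k | ∃ x : FreeGroup α, x⁻¹ * u * x = v ∧ len α x = k}

/-- The conjugator length function of the free group on `α`. -/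
noncomputable def CL (α : Type) (n : ℕ) : ℕ :=
  sInf {N | ∀ u v : FreeGroup α,
    (∃ x : FreeGroup α, x⁻¹ * u * x = v) → len α u + len α v ≤ n →
      conjLen α u v ≤ N}

end FG

/-!
Every `u` is `c r c⁻¹` with `r` cyclically reduced and `|u| = 2|c| + |r|`, and conjugate
cyclically reduced words are cyclic rotations of each other: inducting on a reduced conjugator
`X`, its first letter either cancels against an end of `U`, which rotates `U`, or `X⁻¹ U X` is
already reduced, yet not cyclically reduced. So if `u = c (T D) c⁻¹` and `v = d (D T) d⁻¹` with
`D ≠ []`, then `c T d⁻¹` conjugates `u` to `v` and `2 |c T d⁻¹| + 2 ≤ |u| + |v|`, whence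
`CL(2n+1) ≤ n - 1`. Conversely, every conjugator `x` from `a` to `b^(n-1) a b^(1-n)` satisfies
`2n - 1 ≤ 2|x| + 1`, whence `CL(2n) ≥ n - 1`.
-/

theorem List.IsRotated.exists_append_eq {β : Type*} {l l' : List β} (h : l ~r l') (hl : l ≠ []) :
    ∃ T D, l = T ++ D ∧ l' = D ++ T ∧ T.length < l.length := by
  obtain ⟨k, rfl⟩ := h
  have hk : k % l.length < l.length := Nat.mod_lt _ (List.length_pos_iff.2 hl)
  refine ⟨l.take (k % l.length), l.drop (k % l.length), (List.take_append_drop _ _).symm, ?_, ?_⟩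
  · rw [← List.rotate_mod, List.rotate_eq_drop_append_take hk.le]
  · simpa using hk

namespace FreeGroup

open List

variable {α : Type*} {L L' U V X : List (α × Bool)}

theorem isCyclicallyReduced_iff_isReduced_append_self :
    IsCyclicallyReduced L ↔ IsReduced (L ++ L) := by
  rw [isCyclicallyReduced_iff, IsReduced, IsReduced, isChain_append]
  exact ⟨fun ⟨h, hc⟩ => ⟨h, h, hc⟩, fun ⟨h, _, hc⟩ => ⟨h, hc⟩⟩

theorem IsCyclicallyReduced.of_isRotated (h : IsCyclicallyReduced L) (hr : L ~r L') :
    IsCyclicallyReduced L' := by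
  obtain ⟨k, hk, rfl⟩ := isRotated_iff_mod.1 hr
  rcases eq_or_ne L [] with rfl | hL
  · simp
  rw [isCyclicallyReduced_iff_isReduced_append_self] at h ⊢
  refine (h.append_overlap h hL).infix ⟨L.take k, L.drop k, ?_⟩
  rw [rotate_eq_drop_append_take hk]
  conv_rhs => rw [← take_append_drop k L]
  simp only [append_assoc]

theorem IsReduced.invRev (h : IsReduced L) : IsReduced (invRev L) := by
  classical
  rw [isReduced_iff_reduce_eq] at h ⊢
  rw [reduce_invRev, h]

theorem IsReduced.eq_of_mk_eq (hL : IsReduced L) (hL' : IsReduced L') (h : mk L = mk L') :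
    L = L' := by
  classical
  rw [← hL.reduce_eq, ← hL'.reduce_eq, reduce.sound h]

theorem not_isCyclicallyReduced_invRev_append_append (hX : X ≠ []) :
    ¬ IsCyclicallyReduced (invRev X ++ U ++ X) := by
  obtain ⟨Y, x, rfl⟩ := eq_nil_or_concat X |>.resolve_left hX
  rw [isCyclicallyReduced_iff]
  rintro ⟨-, h⟩
  have := h x (by simp) (x.1, !x.2) (by simp [invRev])
  simp at this

theorem mk_cons (x : α × Bool) (L : List (α × Bool)) : mk (x :: L) = mk [x] * mk L := by
  rw [mul_mk, singleton_append]

theorem IsReduced.invRev_append_append (hX : IsReduced X) (hU : IsReduced U) (hU₀ : U ≠ [])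
    (hhead : ∀ x ∈ X.head?, U.head? ≠ some x)
    (hlast : ∀ x ∈ X.head?, U.getLast? ≠ some (x.1, !x.2)) :
    IsReduced (FreeGroup.invRev X ++ U ++ X) := by
  rw [IsReduced, isChain_append, isChain_append]
  refine ⟨⟨hX.invRev, hU, ?_⟩, hX, ?_⟩
  · intro a ha b hb hab
    simp only [FreeGroup.invRev, getLast?_reverse, head?_map, Option.mem_def,
      Option.map_eq_some_iff] at ha
    obtain ⟨x, hx, rfl⟩ := ha
    refine Bool.not_eq.2 fun h2 => hhead x hx ?_
    rw [Option.mem_def.1 hb, (Prod.ext hab.symm h2.symm : b = x)]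
  · intro a ha b hb hab
    rw [getLast?_append_of_ne_nil _ hU₀] at ha
    by_contra h2
    refine hlast b hb ?_
    rw [Option.mem_def.1 ha, (Prod.ext hab (Bool.eq_not.2 h2) : a = (b.1, !b.2))]

theorem IsCyclicallyReduced.isRotated_of_mk_conj (hX : IsReduced X) (hU : IsCyclicallyReduced U)
    (hU₀ : U ≠ []) (hV : IsCyclicallyReduced V) (h : (mk X)⁻¹ * mk U * mk X = mk V) :
    U ~r V := by
  induction X generalizing U with
  | nil =>
    rw [← one_eq_mk, inv_one, one_mul, mul_one] at h
    rw [hU.isReduced.eq_of_mk_eq hV.isReduced h]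
  | cons x X ih =>
    have hX' : IsReduced X := hX.infix ⟨[x], [], by simp⟩
    by_cases hhead : U.head? = some x
    · obtain ⟨y, U, rfl⟩ := exists_cons_of_ne_nil hU₀
      obtain rfl : x = y := by simpa using hhead.symm
      refine IsRotated.cons_append_singleton.trans <|
        ih hX' (hU.of_isRotated IsRotated.cons_append_singleton) (by simp) ?_
      rw [← h, mk_cons x U, mk_cons x X, ← mul_mk]
      group
    by_cases hlast : U.getLast? = some (x.1, !x.2)
    · obtain ⟨U, rfl⟩ : ∃ U', U = U' ++ [(x.1, !x.2)] :=
        ⟨U.dropLast, (dropLast_append_getLast? _ hlast).symm⟩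
      refine (isRotated_concat _ _).trans <|
        ih hX' (hU.of_isRotated (isRotated_concat _ _)) (by simp) ?_
      rw [← h, mk_cons _ U, mk_cons x X, ← mul_mk, show mk [(x.1, !x.2)] = (mk [x])⁻¹ by
        rw [inv_mk]; rfl]
      group
    · have hred := hX.invRev_append_append hU.isReduced hU₀ (by simpa using hhead)
        (by simpa using hlast)
      rw [inv_mk, mul_mk, mul_mk] at h
      rw [← hred.eq_of_mk_eq hV.isReduced h] at hV
      exact absurd hV (not_isCyclicallyReduced_invRev_append_append (by simp))

variable [DecidableEq α]

theorem IsReduced.norm_mk (h : IsReduced L) : norm (mk L) = L.length := by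
  rw [norm, toWord_mk, h.reduce_eq]

theorem exists_eq_conj_isCyclicallyReduced (u : FreeGroup α) :
    ∃ c r : List (α × Bool), IsCyclicallyReduced r ∧ u = mk c * mk r * (mk c)⁻¹ ∧
      norm u = 2 * c.length + r.length := by
  have h := reduceCyclically.conj_conjugator_reduceCyclically u.toWord
  refine ⟨reduceCyclically.conjugator u.toWord, reduceCyclically u.toWord,
    reduceCyclically.isCyclicallyReduced isReduced_toWord, ?_, ?_⟩
  · rw [inv_mk, mul_mk, mul_mk, h, mk_toWord]
  · conv_lhs => rw [norm, ← h]
    rw [length_append, length_append, invRev_length]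
    ring

theorem norm_conj_le (x u : FreeGroup α) : norm (x⁻¹ * u * x) ≤ 2 * norm x + norm u := by
  have h₁ := norm_mul_le (x⁻¹ * u) x
  have h₂ := norm_mul_le x⁻¹ u
  rw [norm_inv_eq] at h₂
  omega

theorem exists_conj_eq_two_mul_norm_add_two_le {u v x : FreeGroup α} (hu : u ≠ 1)
    (h : x⁻¹ * u * x = v) : ∃ y, y⁻¹ * u * y = v ∧ 2 * norm y + 2 ≤ norm u + norm v := by
  obtain ⟨c, r, hr, rfl, hnu⟩ := exists_eq_conj_isCyclicallyReduced u
  obtain ⟨d, s, hs, rfl, hnv⟩ := exists_eq_conj_isCyclicallyReduced v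
  have hr₀ : r ≠ [] := by
    rintro rfl
    exact hu (by rw [← one_eq_mk]; group)
  have hrs : r ~r s := by
    refine hr.isRotated_of_mk_conj (isReduced_toWord (x := (mk c)⁻¹ * x * mk d)) hr₀ hs ?_
    calc _
        = (mk d)⁻¹ * (x⁻¹ * (mk c * mk r * (mk c)⁻¹) * x) * mk d := by rw [mk_toWord]; group
      _ = mk s := by rw [h]; group
  obtain ⟨T, D, rfl, rfl, hT⟩ := hrs.exists_append_eq hr₀
  refine ⟨mk c * mk T * (mk d)⁻¹, by rw [← mul_mk, ← mul_mk]; group, ?_⟩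
  have hy : norm (mk c * mk T * (mk d)⁻¹) ≤ c.length + T.length + d.length := by
    calc _ ≤ norm (mk c) + norm (mk T) + norm (mk d)⁻¹ :=
          (norm_mul_le _ _).trans (Nat.add_le_add_right (norm_mul_le _ _) _)
      _ ≤ c.length + T.length + d.length := by
          rw [norm_inv_eq]; gcongr <;> exact norm_mk_le
  rw [length_append] at hnu hnv hT
  omega

theorem norm_of_pow_mul_of_mul_inv {a b : α} (hab : a ≠ b) (k : ℕ) :
    norm (of b ^ k * of a * (of b ^ k)⁻¹) = 2 * k + 1 := by
  have hW : IsReduced (replicate k (b, true) ++ [(a, true)] ++ replicate k (b, false)) := by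
    refine IsReduced.append_overlap ?_ ?_ (cons_ne_nil _ _)
    · refine isChain_append.2 ⟨isChain_replicate_of_rel _ fun _ => rfl, isChain_singleton _, ?_⟩
      rintro x hx _ ⟨⟩ _
      rw [eq_of_mem_replicate (mem_of_mem_getLast? hx)]
    · refine isChain_append.2 ⟨isChain_singleton _, isChain_replicate_of_rel _ fun _ => rfl, ?_⟩
      rintro _ ⟨⟩ y hy h
      rw [eq_of_mem_replicate (mem_of_mem_head? hy)] at h
      exact absurd h hab
  have hpow : mk (replicate k (b, true)) = of b ^ k := by rw [← toWord_of_pow, mk_toWord]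
  have hinv : mk (replicate k (b, false)) = (of b ^ k)⁻¹ := by
    rw [← hpow, inv_mk]
    simp [invRev]
  rw [← hinv, ← hpow, show of a = mk [(a, true)] from rfl, mul_mk, mul_mk, hW.norm_mk]
  simp only [length_append, length_replicate, length_singleton]
  ring

end FreeGroup

namespace FG

open FreeGroup

variable {α : Type}

theorem len_eq_norm [DecidableEq α] (u : FreeGroup α) : len α u = norm u := by
  have hprod (L : List (α × Bool)) :
      (L.map fun p => if p.2 then of p.1 else (of p.1)⁻¹).prod = mk L := by
    rw [← lift_of_apply (mk L), lift_mk]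
    simp only [Bool.cond_eq_ite]
  have hmem : norm u ∈ {n | ∃ L : List (α × Bool), L.length = n ∧
      (L.map fun p => if p.2 then of p.1 else (of p.1)⁻¹).prod = u} :=
    ⟨u.toWord, rfl, by rw [hprod, mk_toWord]⟩
  refine le_antisymm (Nat.sInf_le hmem) ?_
  obtain ⟨L, hL, hu⟩ := Nat.sInf_mem ⟨_, hmem⟩
  calc norm u = norm (mk L) := by rw [← hprod, hu]
    _ ≤ L.length := norm_mk_le
    _ = len α u := hL

theorem conjLen_le_len {u v x : FreeGroup α} (h : x⁻¹ * u * x = v) : conjLen α u v ≤ len α x :=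
  Nat.sInf_le ⟨x, h, rfl⟩

theorem le_conjLen {u v : FreeGroup α} {k : ℕ} (hconj : ∃ x : FreeGroup α, x⁻¹ * u * x = v)
    (h : ∀ x : FreeGroup α, x⁻¹ * u * x = v → k ≤ len α x) : k ≤ conjLen α u v := by
  obtain ⟨x, hx⟩ := hconj
  exact le_csInf ⟨_, x, hx, rfl⟩ fun _ ⟨y, hy, hk⟩ => hk ▸ h y hy

theorem CL_eq {m N : ℕ}
    (hle : ∀ u v : FreeGroup α, (∃ x : FreeGroup α, x⁻¹ * u * x = v) →
      len α u + len α v ≤ m → conjLen α u v ≤ N)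
    (hge : ∃ u v : FreeGroup α, (∃ x : FreeGroup α, x⁻¹ * u * x = v) ∧
      len α u + len α v ≤ m ∧ N ≤ conjLen α u v) :
    CL α m = N := by
  obtain ⟨u, v, hconj, hlen, hN⟩ := hge
  exact le_antisymm (Nat.sInf_le hle) (le_csInf ⟨N, hle⟩ fun _ hM => hN.trans (hM u v hconj hlen))

theorem conjLen_le_sub_one [DecidableEq α] {u v : FreeGroup α} {n : ℕ}
    (hconj : ∃ x : FreeGroup α, x⁻¹ * u * x = v) (hlen : len α u + len α v ≤ 2 * n + 1) :
    conjLen α u v ≤ n - 1 := by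
  obtain ⟨x, hx⟩ := hconj
  rcases eq_or_ne u 1 with rfl | hu
  · have h1 : (1 : FreeGroup α)⁻¹ * 1 * 1 = v := by rw [← hx]; group
    have := conjLen_le_len h1
    rw [len_eq_norm, FreeGroup.norm_one] at this
    omega
  · obtain ⟨y, hy, hny⟩ := exists_conj_eq_two_mul_norm_add_two_le hu hx
    have := conjLen_le_len hy
    rw [len_eq_norm] at this
    rw [len_eq_norm, len_eq_norm] at hlen
    omega

theorem exists_le_conjLen [DecidableEq α] {a b : α} (hab : a ≠ b) (k : ℕ) :
    ∃ u v : FreeGroup α, (∃ x : FreeGroup α, x⁻¹ * u * x = v) ∧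
      len α u + len α v = 2 * k + 2 ∧ k ≤ conjLen α u v := by
  have hconj : ((of b ^ k)⁻¹)⁻¹ * of a * (of b ^ k)⁻¹ = of b ^ k * of a * (of b ^ k)⁻¹ := by
    rw [inv_inv]
  refine ⟨of a, _, ⟨_, hconj⟩, ?_, le_conjLen ⟨_, hconj⟩ fun x hx => ?_⟩
  · rw [len_eq_norm, len_eq_norm, norm_of, norm_of_pow_mul_of_mul_inv hab]
    ring
  · have := norm_conj_le x (of a)
    rw [hx, norm_of_pow_mul_of_mul_inv hab, norm_of] at this
    rw [len_eq_norm]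
    omega

end FG

/-- For a free group with free basis of cardinality at least 2,
for every `n ≥ 1`, `CL(2n) = CL(2n+1) = n − 1`. -/
theorem free_group_conjugator_length (α : Type) [Nontrivial α] (n : ℕ) (hn : 1 ≤ n) :
    FG.CL α (2*n) = FG.CL α (2*n+1) ∧ FG.CL α (2*n) = n - 1 := by
  classical
  obtain ⟨a, b, hab⟩ := exists_pair_ne α
  obtain ⟨u, v, hconj, hlen, hlow⟩ := FG.exists_le_conjLen hab (n - 1)
  have hCL : ∀ m, 2 * n ≤ m → m ≤ 2 * n + 1 → FG.CL α m = n - 1 := fun m hm₁ hm₂ =>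
    FG.CL_eq (fun _ _ hc hl => FG.conjLen_le_sub_one hc (hl.trans hm₂))
      ⟨u, v, hconj, by omega, hlow⟩
  exact ⟨(hCL _ le_rfl (by omega)).trans (hCL _ (by omega) le_rfl).symm, hCL _ le_rfl (by omega)⟩
end
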